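/- Let mmse: (0, ∞) → [0, ∞) satisfy mmse(η) ≤ min{R, 2H/η} for constants R, H > 0, and let α = 2H/R. Fix 0 < η_min < α < η_max and h ∈ (0, α]. Consider the hybrid grid that is uniform with step ≤ h on [η_min, α] and geometric with ratio r = 1 + h/α on [α, η_max] (with truncated final interval). Then the discretization functional E = Σ_k ∫_{η_{k-1}}^{η_k}(mmse(η_{k-1}) - mmse(η)) dη, assuming mmse is nonincreasing, satisfies E ≤ h R (2 + log(η_max/α)). -/

import Mathlib

open MeasureTheory intervalIntegral

set_option maxHeartbeats 2000000

private lemma abel_identity (c m : ℕ → ℝ) :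
    ∀ N, ∑ j ∈ Finset.range (N + 1), c j * (m j - m (j + 1)) =
      c 0 * m 0 + (∑ j ∈ Finset.range N, (c (j + 1) - c j) * m (j + 1)) - c N * m (N + 1) := by
  intro N
  induction N with
  | zero => simp; ring
  | succ n ih =>
    rw [Finset.sum_range_succ, ih, Finset.sum_range_succ]
    ring

/-- Hybrid-grid discretization bound: if `mmse` is nonincreasing with
`mmse(η) ≤ min {R, 2H/η}` and `α = 2H/R`, then on the hybrid grid (uniform with step `h`
on `[η_min, α]`, geometric with ratio `r = 1 + h/α` on `[α, η_max]`, truncated final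
intervals), the discretization functional is at most `h R (2 + log(η_max/α))`. -/
theorem hybrid_grid_disc_bound (mmse : ℝ → ℝ) (R H α ηmin ηmax h r : ℝ)
    (hR : 0 < R) (hH : 0 < H) (hα : α = 2 * H / R)
    (h1 : 0 < ηmin) (h2 : ηmin < α) (h3 : α < ηmax)
    (hh : 0 < h) (hhα : h ≤ α) (hr : r = 1 + h / α)
    (hmono : AntitoneOn mmse (Set.Ioi (0 : ℝ)))
    (hnonneg : ∀ x : ℝ, 0 < x → 0 ≤ mmse x)
    (hbound : ∀ x : ℝ, 0 < x → mmse x ≤ min R (2 * H / x))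
    (M Q : ℕ) (hM : M = ⌈(α - ηmin) / h⌉₊) (hQ : Q = ⌈Real.log (ηmax / α) / Real.log r⌉₊)
    (η : ℕ → ℝ)
    (hgrid_unif : ∀ k : ℕ, k < M → η k = ηmin + k * h)
    (hgridM : η M = α)
    (hgrid_geo : ∀ j : ℕ, 0 < j → j < Q → η (M + j) = α * r ^ j)
    (hgrid_end : η (M + Q) = ηmax) :
    ∑ k ∈ Finset.range (M + Q), ∫ x in (η k)..(η (k + 1)), (mmse (η k) - mmse x) ≤
      h * R * (2 + Real.log (ηmax / α)) := by
  have hα0 : 0 < α := by rw [hα]; positivity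
  have hrα : 0 < h / α := div_pos hh hα0
  have hr1 : 1 < r := by rw [hr]; linarith
  have hr0 : 0 < r := by linarith
  have hαr : α * (r - 1) = h := by rw [hr]; field_simp; ring
  have hL0 : 0 < Real.log (ηmax / α) := Real.log_pos (by rw [lt_div_iff₀ hα0]; linarith)
  have hlr0 : 0 < Real.log r := Real.log_pos hr1
  set L := Real.log (ηmax / α) with hL
  -- M, Q ≥ 1
  have hM1 : 1 ≤ M := by rw [hM]; exact Nat.one_le_ceil_iff.mpr (div_pos (by linarith) hh)
  have hQ1 : 1 ≤ Q := by rw [hQ]; exact Nat.one_le_ceil_iff.mpr (div_pos hL0 hlr0)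
  -- ceiling bounds
  have hMle : α - ηmin ≤ M * h := by
    have h' := Nat.le_ceil ((α - ηmin) / h)
    rw [← hM] at h'
    exact (div_le_iff₀ hh).mp h'
  have hMgt : ((M : ℝ) - 1) * h < α - ηmin := by
    have h' := Nat.ceil_lt_add_one (le_of_lt (div_pos (by linarith : (0:ℝ) < α - ηmin) hh))
    rw [← hM] at h'
    have : (M : ℝ) - 1 < (α - ηmin) / h := by linarith
    exact (lt_div_iff₀ hh).mp this
  have hQle : L ≤ Q * Real.log r := by
    have h' := Nat.le_ceil (L / Real.log r)
    rw [← hQ] at h'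
    exact (div_le_iff₀ hlr0).mp h'
  have hQgt : ((Q : ℝ) - 1) * Real.log r < L := by
    have h' := Nat.ceil_lt_add_one (le_of_lt (div_pos hL0 hlr0))
    rw [← hQ] at h'
    have : (Q : ℝ) - 1 < L / Real.log r := by linarith
    exact (lt_div_iff₀ hlr0).mp this
  have hηmax_le : ηmax ≤ α * r ^ Q := by
    have hlog : Real.log (ηmax / α) ≤ Real.log (r ^ Q) := by
      rw [Real.log_pow]; exact hQle
    have hd : ηmax / α ≤ r ^ Q :=
      (Real.log_le_log_iff (div_pos (by linarith) hα0) (pow_pos hr0 Q)).mp hlog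
    calc ηmax = (ηmax / α) * α := by field_simp
    _ ≤ r ^ Q * α := mul_le_mul_of_nonneg_right hd hα0.le
    _ = α * r ^ Q := by ring
  -- geometric grid values
  have hgeo' : ∀ j, j < Q → η (M + j) = α * r ^ j := by
    intro j hj
    rcases Nat.eq_zero_or_pos j with h0 | h0
    · subst h0; simpa using hgridM
    · exact hgrid_geo j h0 hj
  -- positivity of grid
  have hpos : ∀ k, k ≤ M + Q → 0 < η k := by
    intro k hk
    rcases lt_or_ge k M with hkM | hkM
    · rw [hgrid_unif k hkM]
      have : (0:ℝ) ≤ (k : ℝ) * h := by positivity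
      linarith
    · obtain ⟨j, rfl⟩ := Nat.exists_eq_add_of_le hkM
      rcases lt_or_ge j Q with hjQ | hjQ
      · rw [hgeo' j hjQ]; positivity
      · have hjq : j = Q := by omega
        subst hjq; rw [hgrid_end]; linarith
  -- uniform steps
  have hunif_step : ∀ k, k < M → η k ≤ η (k + 1) ∧ η (k + 1) - η k ≤ h := by
    intro k hk
    rcases lt_or_ge (k + 1) M with hk1 | hk1
    · rw [hgrid_unif k hk, hgrid_unif (k + 1) hk1]
      push_cast
      constructor <;> nlinarith
    · have hkM : k + 1 = M := by omega
      have hk' : (k : ℝ) = (M : ℝ) - 1 := by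
        have : ((k : ℝ) + 1) = (M : ℝ) := by exact_mod_cast congrArg (Nat.cast : ℕ → ℝ) hkM
        linarith
      rw [hgrid_unif k hk, hkM, hgridM, hk']
      have hexp : (M : ℝ) * h = ((M : ℝ) - 1) * h + h := by ring
      constructor
      · linarith
      · linarith
  -- geometric steps
  have hgeo_step : ∀ j, j < Q → η (M + j) ≤ η (M + j + 1) ∧
      η (M + j + 1) - η (M + j) ≤ h * r ^ j := by
    intro j hj
    have hpow : (0:ℝ) < r ^ j := pow_pos hr0 j
    have hstep_eq : α * r ^ (j + 1) - α * r ^ j = h * r ^ j := by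
      have : α * r ^ (j + 1) - α * r ^ j = (α * (r - 1)) * r ^ j := by ring
      rw [this, hαr]
    rcases lt_or_ge (j + 1) Q with hj1 | hj1
    · have he : η (M + j + 1) = α * r ^ (j + 1) := by
        rw [show M + j + 1 = M + (j + 1) from by omega]; exact hgeo' (j + 1) hj1
      rw [he, hgeo' j hj]
      have hhp : 0 < h * r ^ j := mul_pos hh hpow
      constructor
      · linarith
      · linarith
    · have hjQ : j + 1 = Q := by omega
      have he : η (M + j + 1) = ηmax := by
        rw [show M + j + 1 = M + Q from by omega]; exact hgrid_end
      rw [he, hgeo' j hj]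
      have hmax2 : ηmax ≤ α * r ^ (j + 1) := by rw [hjQ]; exact hηmax_le
      constructor
      · -- α * r ^ j ≤ ηmax
        have hjr : (j : ℝ) = (Q : ℝ) - 1 := by
          have : ((j : ℝ) + 1) = (Q : ℝ) := by exact_mod_cast congrArg (Nat.cast : ℕ → ℝ) hjQ
          linarith
        have hlog : Real.log (r ^ j) < L := by
          rw [Real.log_pow, hjr]; exact hQgt
        have : (r ^ j : ℝ) < ηmax / α :=
          (Real.log_lt_log_iff hpow (div_pos (by linarith) hα0)).mp hlog
        have h' := (lt_div_iff₀ hα0).mp this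
        calc α * r ^ j = r ^ j * α := by ring
        _ ≤ ηmax := h'.le
      · linarith
  -- full monotonicity
  have hstep : ∀ k, k < M + Q → η k ≤ η (k + 1) := by
    intro k hk
    rcases lt_or_ge k M with hkM | hkM
    · exact (hunif_step k hkM).1
    · obtain ⟨j, rfl⟩ := Nat.exists_eq_add_of_le hkM
      exact (hgeo_step j (by omega)).1
  -- per-interval integral bound
  have hterm : ∀ k, k < M + Q →
      (∫ x in (η k)..(η (k + 1)), (mmse (η k) - mmse x)) ≤
        (η (k + 1) - η k) * (mmse (η k) - mmse (η (k + 1))) := by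
    intro k hk
    have hab : η k ≤ η (k + 1) := hstep k hk
    have ha : 0 < η k := hpos k (by omega)
    have hb : 0 < η (k + 1) := hpos (k + 1) (by omega)
    have hsub : Set.uIcc (η k) (η (k + 1)) ⊆ Set.Ioi (0 : ℝ) := by
      rw [Set.uIcc_of_le hab]
      intro x hx
      exact lt_of_lt_of_le ha hx.1
    have hint : IntervalIntegrable mmse volume (η k) (η (k + 1)) :=
      (hmono.mono hsub).intervalIntegrable
    have hle : ∀ x ∈ Set.Icc (η k) (η (k + 1)),
        mmse (η k) - mmse x ≤ mmse (η k) - mmse (η (k + 1)) := by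
      intro x hx
      have hx0 : x ∈ Set.Ioi (0 : ℝ) := lt_of_lt_of_le ha hx.1
      exact sub_le_sub_left (hmono hx0 (Set.mem_Ioi.mpr hb) hx.2) _
    calc (∫ x in (η k)..(η (k + 1)), (mmse (η k) - mmse x))
        ≤ ∫ _x in (η k)..(η (k + 1)), (mmse (η k) - mmse (η (k + 1))) :=
          integral_mono_on hab (intervalIntegrable_const.sub hint)
            intervalIntegrable_const hle
      _ = (η (k + 1) - η k) * (mmse (η k) - mmse (η (k + 1))) := by
          rw [intervalIntegral.integral_const, smul_eq_mul]
  -- monotone values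
  have hmk : ∀ k, k < M + Q → mmse (η (k + 1)) ≤ mmse (η k) := by
    intro k hk
    exact hmono (Set.mem_Ioi.mpr (hpos k (by omega)))
      (Set.mem_Ioi.mpr (hpos (k + 1) (by omega))) (hstep k hk)
  -- split the sum
  rw [Finset.sum_range_add]
  -- Part A : uniform part
  have partA : ∑ k ∈ Finset.range M,
      (∫ x in (η k)..(η (k + 1)), (mmse (η k) - mmse x)) ≤ h * R := by
    have step : ∀ k ∈ Finset.range M,
        (∫ x in (η k)..(η (k + 1)), (mmse (η k) - mmse x)) ≤
          h * (mmse (η k) - mmse (η (k + 1))) := by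
      intro k hkmem
      have hk : k < M := Finset.mem_range.mp hkmem
      have hk' : k < M + Q := by omega
      refine le_trans (hterm k hk') ?_
      have hd : 0 ≤ mmse (η k) - mmse (η (k + 1)) := by linarith [hmk k hk']
      exact mul_le_mul_of_nonneg_right (by linarith [(hunif_step k hk).2]) hd
    calc ∑ k ∈ Finset.range M, (∫ x in (η k)..(η (k + 1)), (mmse (η k) - mmse x))
        ≤ ∑ k ∈ Finset.range M, h * (mmse (η k) - mmse (η (k + 1))) :=
          Finset.sum_le_sum step
      _ = h * (mmse (η 0) - mmse (η M)) := by
          rw [← Finset.mul_sum, Finset.sum_range_sub' (fun k => mmse (η k))]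
      _ ≤ h * R := by
          have h0 : 0 < η 0 := hpos 0 (by omega)
          have hM0 : 0 < η M := hpos M (by omega)
          have hb1 := (hbound (η 0) h0).trans (min_le_left _ _)
          have hb2 := hnonneg (η M) hM0
          exact mul_le_mul_of_nonneg_left (by linarith) hh.le
  -- Part B : geometric part
  set c : ℕ → ℝ := fun j => h * r ^ j with hc
  set m' : ℕ → ℝ := fun j => mmse (η (M + j)) with hm'
  have partB : ∑ j ∈ Finset.range Q,
      (∫ x in (η (M + j))..(η (M + j + 1)), (mmse (η (M + j)) - mmse x)) ≤
        h * R + h * R * L := by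
    have step : ∀ j ∈ Finset.range Q,
        (∫ x in (η (M + j))..(η (M + j + 1)), (mmse (η (M + j)) - mmse x)) ≤
          c j * (m' j - m' (j + 1)) := by
      intro j hjmem
      have hj : j < Q := Finset.mem_range.mp hjmem
      have hk' : M + j < M + Q := by omega
      refine le_trans (hterm (M + j) hk') ?_
      have hd : 0 ≤ m' j - m' (j + 1) := by
        have := hmk (M + j) hk'
        simp only [hm']
        rw [show M + (j + 1) = M + j + 1 from by omega]
        linarith
      have hΔ := (hgeo_step j hj).2
      have hmm : mmse (η (M + j)) - mmse (η (M + j + 1)) = m' j - m' (j + 1) := by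
        simp only [hm']
        rw [show M + (j + 1) = M + j + 1 from by omega]
      rw [hmm]
      simp only [hc]
      exact mul_le_mul_of_nonneg_right hΔ hd
    have hsum1 : ∑ j ∈ Finset.range Q,
        (∫ x in (η (M + j))..(η (M + j + 1)), (mmse (η (M + j)) - mmse x)) ≤
          ∑ j ∈ Finset.range Q, c j * (m' j - m' (j + 1)) := Finset.sum_le_sum step
    obtain ⟨N, rfl⟩ : ∃ N, Q = N + 1 := ⟨Q - 1, by omega⟩
    rw [abel_identity c m' N] at hsum1
    -- bound the three pieces
    have hc0 : c 0 * m' 0 ≤ h * R := by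
      have : m' 0 = mmse α := by simp [hm', hgridM]
      have hb0 : mmse α ≤ R := (hbound α hα0).trans (min_le_left _ _)
      simp only [hc, pow_zero, mul_one, this]
      nlinarith
    have hcN : 0 ≤ c N * m' (N + 1) := by
      have : 0 < η (M + (N + 1)) := hpos (M + (N + 1)) (by omega)
      have := hnonneg _ this
      have : 0 ≤ m' (N + 1) := this
      have hcN0 : 0 ≤ c N := by simp only [hc]; positivity
      positivity
    have hK : ∑ j ∈ Finset.range N, (c (j + 1) - c j) * m' (j + 1) ≤
        (N : ℝ) * (h * R * Real.log r) := by
      have termK : ∀ j ∈ Finset.range N, (c (j + 1) - c j) * m' (j + 1) ≤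
          h * R * Real.log r := by
        intro j hjmem
        have hj : j < N := Finset.mem_range.mp hjmem
        have hpow : (0:ℝ) < r ^ j := pow_pos hr0 j
        -- c increment
        have hcinc : c (j + 1) - c j = h * r ^ j * (r - 1) := by
          simp only [hc, pow_succ]; ring
        have hcinc0 : 0 ≤ c (j + 1) - c j := by
          rw [hcinc]; exact mul_nonneg (mul_nonneg hh.le hpow.le) (by linarith)
        -- m' bound
        have hval : η (M + (j + 1)) = α * r ^ (j + 1) := hgeo' (j + 1) (by omega)
        have hηp : 0 < α * r ^ (j + 1) := by positivity
        have hmb : m' (j + 1) ≤ 2 * H / (α * r ^ (j + 1)) := by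
          have := (hbound (α * r ^ (j + 1)) hηp).trans (min_le_right _ _)
          simpa [hm', hval] using this
        have hm0 : 0 ≤ m' (j + 1) := by
          have : 0 < η (M + (j + 1)) := by rw [hval]; exact hηp
          exact hnonneg _ this
        calc (c (j + 1) - c j) * m' (j + 1)
            ≤ (c (j + 1) - c j) * (2 * H / (α * r ^ (j + 1))) :=
              mul_le_mul_of_nonneg_left hmb hcinc0
          _ = 2 * H * (r - 1) ^ 2 / r := by
              rw [hcinc, ← hαr]
              field_simp
              ring
          _ ≤ h * R * Real.log r := by
              -- log r ≥ (r-1)/r and h*R = 2H(r-1)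
              have hlog1 : Real.log (1 / r) ≤ 1 / r - 1 :=
                Real.log_le_sub_one_of_pos (by positivity)
              have hloginv : Real.log (1 / r) = -Real.log r := by
                rw [one_div, Real.log_inv]
              have hlogr : (r - 1) / r ≤ Real.log r := by
                rw [hloginv] at hlog1
                have : 1 - 1 / r ≤ Real.log r := by linarith
                calc (r - 1) / r = 1 - 1 / r := by field_simp
                _ ≤ Real.log r := this
              have hhr : h * R = 2 * H * (r - 1) := by
                rw [← hαr, hα]; field_simp
              have h2H0 : (0:ℝ) < 2 * H * (r - 1) := by nlinarith
              calc 2 * H * (r - 1) ^ 2 / r = (2 * H * (r - 1)) * ((r - 1) / r) := by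
                    field_simp
                _ ≤ (2 * H * (r - 1)) * Real.log r :=
                    mul_le_mul_of_nonneg_left hlogr h2H0.le
                _ = h * R * Real.log r := by rw [hhr]
      calc ∑ j ∈ Finset.range N, (c (j + 1) - c j) * m' (j + 1)
          ≤ ∑ _j ∈ Finset.range N, h * R * Real.log r := Finset.sum_le_sum termK
        _ = (N : ℝ) * (h * R * Real.log r) := by
            rw [Finset.sum_const, Finset.card_range, nsmul_eq_mul]
    have hNlog : (N : ℝ) * Real.log r ≤ L := by
      have : ((N + 1 : ℕ) : ℝ) - 1 = (N : ℝ) := by push_cast; ring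
      rw [this] at hQgt
      linarith
    have hNK : (N : ℝ) * (h * R * Real.log r) ≤ h * R * L := by
      have hhR : (0:ℝ) ≤ h * R := by positivity
      calc (N : ℝ) * (h * R * Real.log r) = h * R * ((N : ℝ) * Real.log r) := by ring
        _ ≤ h * R * L := mul_le_mul_of_nonneg_left hNlog hhR
    linarith
  linarith [partA, partB, mul_pos (mul_pos hh hR) hL0]
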